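/- arXiv:math/0206104 — 2 statements merged into one kernel-verified Lean document; each statement's English description precedes it below -/
import Mathlib

section
/- Let A ∈ M_2(F[t]) be hermitian with det(A) ≠ 0 and gcd(A) = 1. Then A is congruent to the diagonal matrix diag(1, det(A)). -/
/-!
The fixed ring of `t ↦ -t` is `F[t²]`, and over an algebraically closed field every fixed
polynomial is a norm `x x*`. It suffices to show that `A` represents `1`: if `v* A v = 1`, the
matrix with columns `v` and `(-(A v)₁*, (A v)₀*)` has determinant `1` and conjugates `A` to
`diag(1, det A)`.

That `A` represents `1` is proved by induction on `deg det A`. For constant determinant, a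
Euclidean reduction of the `(0,0)` entry ends at a constant or zero entry, where a representation
is explicit. Otherwise let `γ` be a root of `det A`. After a constant change of basis the first
column of `A` vanishes at `γ`, so `A = P* B P` with `P = diag(t - γ, 1)` and
`deg det B = deg det A - 2`. By induction `B` is congruent to `diag(1, μ)`, and it remains to
solve `f f* + μ g g* = 1` subject to one linear condition on `(f, g)` at `γ`, which makes the
corresponding vector lie in the image of `P`. Primitivity of `A` is what makes this condition
solvable, by separate constructions at the ramified point `γ = 0` and at `γ ≠ 0`.
-/

open Polynomial

/-- The involution of `F[t]` fixing `F` and sending `t ↦ -t`. -/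
noncomputable def pstar {F : Type*} [Field F] (p : F[X]) : F[X] := p.comp (-X)

/-- The induced involution on matrices: transpose composed with entrywise `pstar`. -/
noncomputable def mstar {F : Type*} [Field F] {n : ℕ}
    (A : Matrix (Fin n) (Fin n) F[X]) : Matrix (Fin n) (Fin n) F[X] :=
  Matrix.of fun i j => pstar (A j i)

/-- `A` and `B` are congruent if `B = S* A S` for some `S ∈ GL_n(F[t])`. -/
def PolyCongruent {F : Type*} [Field F] {n : ℕ}
    (A B : Matrix (Fin n) (Fin n) F[X]) : Prop :=
  ∃ S : Matrix (Fin n) (Fin n) F[X], IsUnit S.det ∧ B = mstar S * A * S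

open Matrix

section

variable {F : Type*} [Field F]

section Involution

@[simp] lemma pstar_add (p q : F[X]) : pstar (p + q) = pstar p + pstar q := add_comp
@[simp] lemma pstar_mul (p q : F[X]) : pstar (p * q) = pstar p * pstar q := mul_comp ..
@[simp] lemma pstar_sub (p q : F[X]) : pstar (p - q) = pstar p - pstar q := sub_comp
@[simp] lemma pstar_neg (p : F[X]) : pstar (-p) = -pstar p := neg_comp
@[simp] lemma pstar_one : pstar (1 : F[X]) = 1 := one_comp
@[simp] lemma pstar_zero : pstar (0 : F[X]) = 0 := zero_comp
@[simp] lemma pstar_C (c : F) : pstar (C c) = C c := C_comp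
@[simp] lemma pstar_X : pstar (X : F[X]) = -X := X_comp

@[simp] lemma pstar_pstar (p : F[X]) : pstar (pstar p) = p := comp_neg_X_comp_neg_X p

@[simp] lemma pstar_eq_zero {p : F[X]} : pstar p = 0 ↔ p = 0 := comp_neg_X_eq_zero_iff

@[simp] lemma eval_pstar (p : F[X]) (γ : F) : (pstar p).eval γ = p.eval (-γ) := by
  simp [pstar, eval_comp]

@[simp] lemma natDegree_pstar (p : F[X]) : (pstar p).natDegree = p.natDegree := by
  simp [pstar, natDegree_comp]

lemma pstar_sum {ι : Type*} (s : Finset ι) (f : ι → F[X]) :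
    pstar (∑ i ∈ s, f i) = ∑ i ∈ s, pstar (f i) :=
  map_sum (compRingHom (-X)) f s

lemma IsUnit.pstar {p : F[X]} (hp : IsUnit p) : IsUnit (pstar p) :=
  hp.map (compRingHom (-X))

lemma coeff_pstar (p : F[X]) (n : ℕ) : (pstar p).coeff n = (-1) ^ n * p.coeff n := by
  rw [pstar, show (-X : F[X]) = C (-1) * X by simp, comp_C_mul_X_coeff, mul_comm]

end Involution

section Norms

lemma pstar_expand_two (g : F[X]) : pstar (expand F 2 g) = expand F 2 g := by
  rw [pstar, expand_eq_comp_X_pow, comp_assoc, X_pow_comp, neg_sq]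

lemma pstar_eq_self_iff (h2 : (2 : F) ≠ 0) {h : F[X]} :
    pstar h = h ↔ ∃ g, h = expand F 2 g := by
  refine ⟨fun hh => ⟨contract 2 h, ?_⟩, fun ⟨g, hg⟩ => hg ▸ pstar_expand_two g⟩
  ext n
  rw [coeff_expand two_pos, coeff_contract two_ne_zero]
  split_ifs with hn
  · rw [Nat.div_mul_cancel hn]
  · have hodd : Odd n := Nat.odd_iff.2 (Nat.two_dvd_ne_zero.1 hn)
    have h' := congrArg (coeff · n) hh
    simp only [coeff_pstar, hodd.neg_one_pow] at h'
    have : (2 : F) * h.coeff n = 0 := by linear_combination -h'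
    exact (mul_eq_zero.1 this).resolve_left h2

lemma exists_eq_mul_pstar_mul_of_eval_eq_zero (h2 : (2 : F) ≠ 0) {h : F[X]} (hh : pstar h = h)
    {γ : F} (hγ : h.eval γ = 0) :
    ∃ k, pstar k = k ∧ h = (X - C γ) * pstar (X - C γ) * k := by
  obtain ⟨g, rfl⟩ := (pstar_eq_self_iff h2).1 hh
  rw [expand_eval] at hγ
  obtain ⟨g', rfl⟩ := dvd_iff_isRoot.2 hγ
  refine ⟨-expand F 2 g', by rw [pstar_neg, pstar_expand_two], ?_⟩
  simp only [map_mul, map_sub, expand_X, expand_C, pstar_sub, pstar_X, pstar_C, map_pow]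
  ring

lemma exists_mul_pstar_eq_X_sq_sub_C_and_eval_ne_zero [IsAlgClosed F] (h2 : (2 : F) ≠ 0)
    {γ₀ : F} (hγ₀ : γ₀ ≠ 0) (r : F) :
    ∃ x, x * pstar x = X ^ 2 - C r ∧ x.eval γ₀ ≠ 0 := by
  obtain ⟨i, hi⟩ := IsAlgClosed.exists_pow_nat_eq (-1 : F) two_pos
  have hCi : C i * C i = -1 := by rw [← C_mul, ← sq, hi, C_neg, C_1]
  obtain ⟨s₀, hs₀⟩ := IsAlgClosed.exists_pow_nat_eq r two_pos
  obtain ⟨s, hs, hsγ⟩ : ∃ s, s ^ 2 = r ∧ s ≠ γ₀ := by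
    by_cases h : s₀ = γ₀
    · refine ⟨-s₀, by rw [neg_sq, hs₀], fun h' => hγ₀ ?_⟩
      have : (2 : F) * γ₀ = 0 := by linear_combination -h - h'
      exact (mul_eq_zero.1 this).resolve_left h2
    · exact ⟨s₀, hs₀, h⟩
  refine ⟨C i * (X - C s), ?_, ?_⟩
  · rw [← hs, C_pow]
    simp only [pstar_mul, pstar_sub, pstar_C, pstar_X]
    linear_combination (-(X ^ 2 - C s ^ 2)) * hCi
  · have hi0 : i ≠ 0 := by rintro rfl; simp at hi
    simpa [sub_eq_zero] using ⟨hi0, hsγ.symm⟩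

lemma exists_mul_pstar_eq_and_eval_ne_zero [IsAlgClosed F] (h2 : (2 : F) ≠ 0) {h : F[X]}
    (hh : pstar h = h) (h0 : h ≠ 0) {γ₀ : F} (hγ₀ : γ₀ ≠ 0) :
    ∃ x, x * pstar x = h ∧ x.eval γ₀ ≠ 0 := by
  obtain ⟨g, rfl⟩ := (pstar_eq_self_iff h2).1 hh
  have hg : g ≠ 0 := by rintro rfl; simp at h0
  set P : F[X] → Prop := fun u => ∃ x, x * pstar x = u ∧ x.eval γ₀ ≠ 0
  have hmul : ∀ u v, P u → P v → P (u * v) := by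
    rintro u v ⟨x, rfl, hx⟩ ⟨y, rfl, hy⟩
    exact ⟨x * y, by simp only [pstar_mul]; ring, by simpa using ⟨hx, hy⟩⟩
  have hconst : P (C g.leadingCoeff) := by
    obtain ⟨s, hs⟩ := IsAlgClosed.exists_pow_nat_eq g.leadingCoeff two_pos
    refine ⟨C s, by rw [pstar_C, ← C_mul, ← sq, hs], fun h => leadingCoeff_ne_zero.2 hg ?_⟩
    rw [← hs, show s = 0 by simpa using h, zero_pow two_ne_zero]
  rw [← C_leadingCoeff_mul_prod_multiset_X_sub_C (IsAlgClosed.card_roots_eq_natDegree (p := g)),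
    map_mul, expand_C, map_multiset_prod, Multiset.map_map]
  refine hmul _ _ hconst (Multiset.prod_induction _ _ hmul ⟨1, by simp, by simp⟩ ?_)
  simp only [Multiset.mem_map, Function.comp_apply, map_sub, expand_X, expand_C]
  rintro _ ⟨r, -, rfl⟩
  exact exists_mul_pstar_eq_X_sq_sub_C_and_eval_ne_zero h2 hγ₀ r

lemma exists_mul_pstar_eq [IsAlgClosed F] (h2 : (2 : F) ≠ 0) {h : F[X]} (hh : pstar h = h) :
    ∃ x, x * pstar x = h := by
  obtain rfl | h0 := eq_or_ne h 0
  · exact ⟨0, by simp⟩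
  · obtain ⟨x, hx, -⟩ := exists_mul_pstar_eq_and_eval_ne_zero h2 hh h0 one_ne_zero
    exact ⟨x, hx⟩

end Norms

namespace Matrix

variable {R : Type*} [CommRing R] {l m n o : Type*}

def entryIdeal (A : Matrix m n R) : Ideal R := Ideal.span (Set.range fun p : m × n => A p.1 p.2)

lemma apply_mem_entryIdeal (A : Matrix m n R) (i : m) (j : n) : A i j ∈ A.entryIdeal :=
  Ideal.subset_span ⟨(i, j), rfl⟩

lemma entryIdeal_mul_le_left [Fintype m] (A : Matrix l m R) (B : Matrix m n R) :
    (A * B).entryIdeal ≤ B.entryIdeal :=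
  Ideal.span_le.2 <| Set.range_subset_iff.2 fun _ =>
    Ideal.sum_mem _ fun _ _ => Ideal.mul_mem_left _ _ (apply_mem_entryIdeal _ _ _)

lemma entryIdeal_mul_le_right [Fintype m] (A : Matrix l m R) (B : Matrix m n R) :
    (A * B).entryIdeal ≤ A.entryIdeal :=
  Ideal.span_le.2 <| Set.range_subset_iff.2 fun _ =>
    Ideal.sum_mem _ fun _ _ => Ideal.mul_mem_right _ _ (apply_mem_entryIdeal _ _ _)

lemma entryIdeal_mul_mul_le [Fintype m] [Fintype n] (A : Matrix l m R) (B : Matrix m n R)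
    (C : Matrix n o R) : (A * B * C).entryIdeal ≤ B.entryIdeal :=
  (entryIdeal_mul_le_right _ _).trans (entryIdeal_mul_le_left _ _)

lemma exists_eval_ne_zero_of_entryIdeal_eq_top [Nontrivial R] {A : Matrix m n R[X]}
    (hA : A.entryIdeal = ⊤) (γ : R) : ∃ i j, (A i j).eval γ ≠ 0 := by
  by_contra! h
  have : A.entryIdeal ≤ RingHom.ker (evalRingHom γ) :=
    Ideal.span_le.2 <| Set.range_subset_iff.2 fun p => by simpa using h p.1 p.2
  have h1 : (1 : R[X]) ∈ RingHom.ker (evalRingHom γ) := this (hA ▸ Submodule.mem_top)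
  simp at h1

end Matrix

section Hermitian

variable {n : ℕ}

@[simp] lemma mstar_apply (A : Matrix (Fin n) (Fin n) F[X]) (i j : Fin n) :
    mstar A i j = pstar (A j i) := rfl

lemma mstar_mul (A B : Matrix (Fin n) (Fin n) F[X]) : mstar (A * B) = mstar B * mstar A := by
  ext i j
  simp [Matrix.mul_apply, pstar_sum, mul_comm]

@[simp] lemma mstar_mstar (A : Matrix (Fin n) (Fin n) F[X]) : mstar (mstar A) = A := by
  ext; simp

@[simp] lemma mstar_one : mstar (1 : Matrix (Fin n) (Fin n) F[X]) = 1 := by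
  ext i j
  by_cases h : i = j <;> simp [Matrix.one_apply, h, eq_comm]

lemma det_mstar (A : Matrix (Fin n) (Fin n) F[X]) : (mstar A).det = pstar A.det := by
  rw [show mstar A = ((compRingHom (-X)).mapMatrix A)ᵀ from rfl, Matrix.det_transpose,
    ← RingHom.map_det]
  rfl

lemma mstar_mstar_mul_mul {A : Matrix (Fin n) (Fin n) F[X]} (hA : mstar A = A)
    (S : Matrix (Fin n) (Fin n) F[X]) : mstar (mstar S * A * S) = mstar S * A * S := by
  rw [mstar_mul, mstar_mul, mstar_mstar, hA, Matrix.mul_assoc]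

lemma det_mstar_mul_mul (A S : Matrix (Fin n) (Fin n) F[X]) :
    (mstar S * A * S).det = pstar S.det * S.det * A.det := by
  rw [Matrix.det_mul, Matrix.det_mul, det_mstar]; ring

lemma entryIdeal_mstar_mul_mul {S : Matrix (Fin n) (Fin n) F[X]} (hS : IsUnit S.det)
    (A : Matrix (Fin n) (Fin n) F[X]) : (mstar S * A * S).entryIdeal = A.entryIdeal := by
  refine (Matrix.entryIdeal_mul_mul_le _ _ _).antisymm ?_
  have hSS : S * S⁻¹ = 1 := Matrix.mul_nonsing_inv S hS
  calc A.entryIdeal = (mstar S⁻¹ * (mstar S * A * S) * S⁻¹).entryIdeal := by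
        rw [Matrix.mul_assoc, Matrix.mul_assoc, hSS, Matrix.mul_one, ← Matrix.mul_assoc,
          ← mstar_mul, hSS, mstar_one, Matrix.one_mul]
    _ ≤ (mstar S * A * S).entryIdeal := Matrix.entryIdeal_mul_mul_le _ _ _

noncomputable def hermForm (A : Matrix (Fin n) (Fin n) F[X]) (v : Fin n → F[X]) : F[X] :=
  (fun i => pstar (v i)) ⬝ᵥ (A *ᵥ v)

lemma hermForm_mstar_mul_mul (A S : Matrix (Fin n) (Fin n) F[X]) (v : Fin n → F[X]) :
    hermForm (mstar S * A * S) v = hermForm A (S *ᵥ v) := by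
  have : (fun i => pstar (v i)) ᵥ* mstar S = fun i => pstar ((S *ᵥ v) i) := by
    ext j
    simp [Matrix.vecMul, Matrix.mulVec, dotProduct, pstar_sum, mul_comm]
  rw [hermForm, hermForm, ← Matrix.mulVec_mulVec, ← Matrix.mulVec_mulVec,
    Matrix.dotProduct_mulVec, this]

lemma range_hermForm_mstar_mul_mul_subset (A S : Matrix (Fin n) (Fin n) F[X]) :
    Set.range (hermForm (mstar S * A * S)) ⊆ Set.range (hermForm A) := by
  rintro _ ⟨v, rfl⟩
  exact ⟨S *ᵥ v, (hermForm_mstar_mul_mul A S v).symm⟩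

end Hermitian

lemma pstar_apply_of_mstar_eq {n : ℕ} {A : Matrix (Fin n) (Fin n) F[X]} (hA : mstar A = A)
    (i j : Fin n) : pstar (A i j) = A j i := by
  simpa using congrFun (congrFun hA j) i

lemma exists_eq_of_fin_two_of_mstar_eq {A : Matrix (Fin 2) (Fin 2) F[X]} (hA : mstar A = A) :
    ∃ a b d, pstar a = a ∧ pstar d = d ∧ A = !![a, b; pstar b, d] :=
  ⟨A 0 0, A 0 1, A 1 1, pstar_apply_of_mstar_eq hA 0 0, pstar_apply_of_mstar_eq hA 1 1, by
    rw [pstar_apply_of_mstar_eq hA 0 1]; exact eta_fin_two A⟩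

lemma hermForm_fin_two (A : Matrix (Fin 2) (Fin 2) F[X]) (v : Fin 2 → F[X]) :
    hermForm A v =
      pstar (v 0) * (A 0 0 * v 0 + A 0 1 * v 1) + pstar (v 1) * (A 1 0 * v 0 + A 1 1 * v 1) := by
  simp [hermForm, mulVec, dotProduct, Fin.sum_univ_two]

lemma mstar_of_fin_two (a b c d : F[X]) :
    mstar !![a, b; c, d] = !![pstar a, pstar c; pstar b, pstar d] := by
  ext i j; fin_cases i <;> fin_cases j <;> rfl

theorem exists_det_eq_one_mstar_mul_mul_eq_diagonal {A : Matrix (Fin 2) (Fin 2) F[X]}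
    (hA : mstar A = A) (h : 1 ∈ Set.range (hermForm A)) :
    ∃ S : Matrix (Fin 2) (Fin 2) F[X], S.det = 1 ∧ mstar S * A * S = diagonal ![1, A.det] := by
  obtain ⟨v, hv⟩ := h
  obtain ⟨a, b, d, ha, hd, rfl⟩ := exists_eq_of_fin_two_of_mstar_eq hA
  obtain ⟨x, y, rfl⟩ : ∃ x y, v = ![x, y] := ⟨v 0, v 1, by ext i; fin_cases i <;> rfl⟩
  simp only [hermForm_fin_two, of_apply, cons_val', cons_val_zero, cons_val_one, empty_val',
    cons_val_fin_one] at hv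
  have hv' : x * pstar (a * x + b * y) + y * pstar (pstar b * x + d * y) = 1 := by
    simpa [mul_comm] using congrArg pstar hv
  refine ⟨!![x, -pstar (pstar b * x + d * y); y, pstar (a * x + b * y)], ?_, ?_⟩
  · rw [det_fin_two_of]; linear_combination hv'
  · rw [mstar_of_fin_two, det_fin_two_of, diagonal_vec2, mul_fin_two, mul_fin_two]
    refine Matrix.ext fun i j => ?_
    fin_cases i <;> fin_cases j <;> simp only [of_apply, cons_val', cons_val_zero,
      cons_val_one, cons_val_fin_one, Fin.zero_eta, Fin.mk_one, Fin.isValue, pstar_add, pstar_mul,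
      pstar_neg, pstar_pstar, ha, hd]
    · linear_combination hv
    · ring
    · ring
    · linear_combination (a * d - b * pstar b) * hv

lemma one_mem_range_hermForm_of_apply_zero_zero_eq_zero (h2 : (2 : F) ≠ 0)
    {A : Matrix (Fin 2) (Fin 2) F[X]} (hA : mstar A = A) {c : F} (hc : c ≠ 0)
    (hdet : A.det = C c) (ha : A 0 0 = 0) : 1 ∈ Set.range (hermForm A) := by
  have hd := pstar_apply_of_mstar_eq hA 1 1
  have hb := pstar_apply_of_mstar_eq hA 0 1
  rw [det_fin_two, ha, ← hb] at hdet
  have hb0 : A 0 1 ≠ 0 := by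
    rintro h
    simp only [h, pstar_zero, mul_zero, sub_zero] at hdet
    exact hc (C_eq_zero.1 hdet.symm)
  obtain ⟨b₀, hb₀⟩ : ∃ b₀, A 0 1 = C b₀ := by
    refine ⟨_, eq_C_of_natDegree_eq_zero ?_⟩
    have := congrArg natDegree hdet
    rw [zero_mul, zero_sub, natDegree_neg, natDegree_mul hb0 (pstar_eq_zero.not.2 hb0),
      natDegree_pstar, natDegree_C] at this
    omega
  have hb₀0 : b₀ ≠ 0 := by rintro rfl; simp [hb₀] at hb0
  refine ⟨![C (2 * b₀)⁻¹ * (1 - A 1 1), 1], ?_⟩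
  have hinv : 2 * C b₀ * C (2 * b₀)⁻¹ = (1 : F[X]) := by
    rw [show (2 * C b₀ : F[X]) = C (2 * b₀) by rw [C_mul, C_ofNat], ← C_mul,
      mul_inv_cancel₀ (mul_ne_zero h2 hb₀0), C_1]
  rw [hermForm_fin_two, ha, ← hb, hb₀]
  simp only [cons_val_zero, cons_val_one, pstar_mul, pstar_C, pstar_sub, pstar_one, hd]
  linear_combination (1 - A 1 1) * hinv

lemma one_mem_range_hermForm_of_apply_zero_zero_eq_C [IsAlgClosed F]
    {A : Matrix (Fin 2) (Fin 2) F[X]} {a : F} (ha : A 0 0 = C a) (ha0 : a ≠ 0) :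
    1 ∈ Set.range (hermForm A) := by
  obtain ⟨r, hr⟩ := IsAlgClosed.exists_pow_nat_eq a⁻¹ two_pos
  refine ⟨![C r, 0], ?_⟩
  rw [hermForm_fin_two, ha]
  simp only [cons_val_zero, cons_val_one, pstar_C, pstar_zero, mul_zero, add_zero, zero_mul,
    ← C_mul]
  rw [show r * (a * r) = r ^ 2 * a by ring, hr, inv_mul_cancel₀ ha0, C_1]

lemma natDegree_lt_of_mul_eq_C_add_mul_pstar {a d r : F[X]} {c : F} (ha : 0 < a.natDegree)
    (hr : r.natDegree < a.natDegree) (h : d * a = C c + r * pstar r) :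
    d.natDegree < a.natDegree := by
  obtain rfl | hd := eq_or_ne d 0
  · simpa using ha
  have ha0 : a ≠ 0 := by rintro rfl; simp at ha
  have hle : (C c + r * pstar r).natDegree ≤ 2 * r.natDegree :=
    (natDegree_add_le _ _).trans <| max_le (by simp) <|
      natDegree_mul_le.trans (by rw [natDegree_pstar]; omega)
  rw [← h, natDegree_mul hd ha0] at hle
  omega

lemma exists_mstar_mul_mul_natDegree_lt {A : Matrix (Fin 2) (Fin 2) F[X]} (hA : mstar A = A)
    {c : F} (hdet : A.det = C c) (ha : 0 < (A 0 0).natDegree) :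
    ∃ T : Matrix (Fin 2) (Fin 2) F[X], (mstar T * A * T).det = C c ∧
      ((mstar T * A * T) 0 0).natDegree < (A 0 0).natDegree := by
  set T : Matrix (Fin 2) (Fin 2) F[X] := !![-(A 0 1 / A 0 0), 1; 1, 0]
  have hdetT : (mstar T * A * T).det = C c := by
    rw [det_mstar_mul_mul, hdet, det_fin_two_of]; simp
  have hA₂ := mstar_mstar_mul_mul hA T
  refine ⟨T, hdetT, natDegree_lt_of_mul_eq_C_add_mul_pstar (c := c) ha
    (natDegree_mod_lt (A 0 1) ha.ne') ?_⟩
  have h11 : (mstar T * A * T) 1 1 = A 0 0 := by simp [T, Matrix.mul_apply, Fin.sum_univ_two]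
  have h10 : (mstar T * A * T) 1 0 = A 0 1 % A 0 0 := by
    simp only [T, Matrix.mul_apply, Fin.sum_univ_two, mstar_apply, of_apply, cons_val',
      cons_val_zero, cons_val_one, cons_val_fin_one, pstar_one, pstar_zero,
      EuclideanDomain.mod_eq_sub_mul_div]
    ring
  rw [det_fin_two, ← pstar_apply_of_mstar_eq hA₂ 1 0, h11, h10] at hdetT
  linear_combination hdetT

theorem one_mem_range_hermForm_of_det_eq_C [IsAlgClosed F] (h2 : (2 : F) ≠ 0)
    {A : Matrix (Fin 2) (Fin 2) F[X]} (hA : mstar A = A) {c : F} (hc : c ≠ 0)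
    (hdet : A.det = C c) : 1 ∈ Set.range (hermForm A) := by
  induction hn : (A 0 0).natDegree using Nat.strong_induction_on generalizing A with
  | _ n ih =>
  by_cases ha : A 0 0 = 0
  · exact one_mem_range_hermForm_of_apply_zero_zero_eq_zero h2 hA hc hdet ha
  obtain hn0 | hn0 := Nat.eq_zero_or_pos n
  · obtain ⟨a, ha'⟩ := natDegree_eq_zero.1 (hn ▸ hn0)
    exact one_mem_range_hermForm_of_apply_zero_zero_eq_C ha'.symm (by rintro rfl; simp_all)
  obtain ⟨T, hT, hlt⟩ := exists_mstar_mul_mul_natDegree_lt hA hdet (hn ▸ hn0)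
  exact range_hermForm_mstar_mul_mul_subset A T
    (ih _ (hn ▸ hlt) (mstar_mstar_mul_mul hA T) hT rfl)

lemma exists_norm_form_eq_one_at_zero [IsAlgClosed F] (h2 : (2 : F) ≠ 0) {μ : F[X]}
    (hμ : pstar μ = μ) {p q : F[X]} (hpq : p.eval 0 ^ 2 + μ.eval 0 * q.eval 0 ^ 2 ≠ 0) :
    ∃ f g : F[X], f * pstar f + μ * (g * pstar g) = 1 ∧ (q * f + p * g).eval 0 = 0 := by
  obtain ⟨ρ, hρ⟩ :=
    IsAlgClosed.exists_pow_nat_eq (p.eval 0 ^ 2 + μ.eval 0 * q.eval 0 ^ 2)⁻¹ two_pos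
  have hm : ρ ^ 2 * (p.eval 0 ^ 2 + μ.eval 0 * q.eval 0 ^ 2) = 1 := by
    rw [hρ, inv_mul_cancel₀ hpq]
  set g := -C (ρ * q.eval 0)
  obtain ⟨f₀, hf₀⟩ := exists_mul_pstar_eq h2 (h := 1 - μ * (g * pstar g))
    (by rw [pstar_sub, pstar_one, pstar_mul, pstar_mul, pstar_pstar, hμ, mul_comm (pstar g)])
  have hf₀0 : f₀.eval 0 ^ 2 = (ρ * p.eval 0) ^ 2 := by
    have := congrArg (eval 0) hf₀
    simp only [eval_mul, eval_pstar, neg_zero, eval_sub, eval_one, g, eval_neg, eval_C,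
      pstar_neg, pstar_C] at this
    linear_combination this - hm
  obtain ⟨f, hf, hf0⟩ :
      ∃ f, f * pstar f = f₀ * pstar f₀ ∧ f.eval 0 = ρ * p.eval 0 := by
    rcases sq_eq_sq_iff_eq_or_eq_neg.1 hf₀0 with h | h
    · exact ⟨f₀, rfl, h⟩
    · exact ⟨-f₀, by simp, by simp [h]⟩
  refine ⟨f, g, by rw [hf, hf₀]; ring, ?_⟩
  simp only [eval_add, eval_mul, hf0, g, eval_neg, eval_C]
  ring

lemma exists_norm_form_eq_one_at_ne_zero [IsAlgClosed F] (h2 : (2 : F) ≠ 0) {μ : F[X]}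
    (hμ : pstar μ = μ) (hμ0 : μ ≠ 0) {γ : F} (hγ : γ ≠ 0) {p q : F[X]}
    (hpμ : μ.eval γ ≠ 0 ∨ p.eval γ ≠ 0) :
    ∃ f g : F[X], f * pstar f + μ * (g * pstar g) = 1 ∧ (q * f + p * g).eval γ = 0 := by
  by_cases hq : q.eval γ = 0
  · exact ⟨1, 0, by simp, by simp [hq]⟩
  obtain ⟨x₀, hx₀, hx₀γ⟩ := exists_mul_pstar_eq_and_eval_ne_zero h2 (h := -μ)
    (by simp [hμ]) (neg_ne_zero.2 hμ0) (neg_ne_zero.2 hγ)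
  obtain ⟨x, hx, hK⟩ : ∃ x, x * pstar x = -μ ∧
      q.eval γ * μ.eval γ + p.eval γ * x.eval (-γ) ≠ 0 := by
    by_contra! H
    have h₁ := H x₀ hx₀
    have h₂ := H (-x₀) (by simp [hx₀])
    rw [eval_neg] at h₂
    have hqμ : 2 * (q.eval γ * μ.eval γ) = 0 := by linear_combination h₁ + h₂
    have hpx : 2 * (p.eval γ * x₀.eval (-γ)) = 0 := by linear_combination h₁ - h₂
    simp only [mul_eq_zero, h2, hq, hx₀γ, false_or, or_false] at hqμ hpx
    exact hpμ.elim (· hqμ) (· hpx)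
  set K := q.eval γ * μ.eval γ + p.eval γ * x.eval (-γ)
  -- `ℓ` is odd, so `f f* = 1 - ℓ²μ²` and `μ g g* = ℓ²μ²`; `ℓ(γ) = q(γ) / K` gives the constraint
  set ℓ := C (q.eval γ / (K * γ)) * X
  have hℓ : pstar ℓ = -ℓ := by simp [ℓ]
  refine ⟨1 - ℓ * μ, -(ℓ * pstar x), ?_, ?_⟩
  · simp only [pstar_sub, pstar_one, pstar_mul, pstar_neg, hℓ, hμ, pstar_pstar]
    linear_combination (-(μ * ℓ ^ 2)) * hx
  · simp only [eval_add, eval_mul, eval_sub, eval_one, eval_neg, eval_pstar, ℓ, eval_C, eval_X]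
    field_simp
    ring

lemma exists_isUnit_det_eval_mstar_mul_mul_eq_zero {A : Matrix (Fin 2) (Fin 2) F[X]} {γ : F}
    (hγ : A.det.eval γ = 0) :
    ∃ T : Matrix (Fin 2) (Fin 2) F[X], IsUnit T.det ∧
      ((mstar T * A * T) 0 0).eval γ = 0 ∧ ((mstar T * A * T) 1 0).eval γ = 0 := by
  obtain ⟨v, hv0, hv⟩ := exists_mulVec_eq_zero_iff.2
    (show ((evalRingHom γ).mapMatrix A).det = 0 by rw [← RingHom.map_det]; exact hγ)
  have e₀ := congrFun hv 0
  have e₁ := congrFun hv 1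
  simp only [mulVec, dotProduct, Fin.sum_univ_two, RingHom.mapMatrix_apply, map_apply,
    coe_evalRingHom, Pi.zero_apply] at e₀ e₁
  obtain ⟨c₂, c₄, hc⟩ : ∃ c₂ c₄ : F, v 0 * c₄ - c₂ * v 1 ≠ 0 := by
    by_cases h : v 0 = 0
    · refine ⟨1, 0, fun h' => hv0 ?_⟩
      ext i; fin_cases i <;> simp_all
    · exact ⟨0, 1, by simpa⟩
  refine ⟨!![C (v 0), C c₂; C (v 1), C c₄], ?_, ?_, ?_⟩
  · rw [det_fin_two_of, ← C_mul, ← C_mul, ← C_sub]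
    exact isUnit_C.2 (Ne.isUnit hc)
  all_goals
    simp only [mstar_of_fin_two, pstar_C, Matrix.mul_apply, Fin.sum_univ_two, of_apply, cons_val',
      cons_val_zero, cons_val_one, cons_val_fin_one, eval_add, eval_mul, eval_C]
  · linear_combination v 0 * e₀ + v 1 * e₁
  · linear_combination c₂ * e₀ + c₄ * e₁

lemma mstar_mul_mul_diag_fin_two (π : F[X]) (B : Matrix (Fin 2) (Fin 2) F[X]) :
    mstar !![π, 0; 0, 1] * B * !![π, 0; 0, 1] =
      !![pstar π * B 0 0 * π, pstar π * B 0 1; B 1 0 * π, B 1 1] := by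
  rw [eta_fin_two B, mstar_of_fin_two, mul_fin_two, mul_fin_two]
  simp

lemma exists_eq_mstar_mul_mul_of_eval_eq_zero (h2 : (2 : F) ≠ 0)
    {A : Matrix (Fin 2) (Fin 2) F[X]} (hA : mstar A = A) {γ : F}
    (h0 : (A 0 0).eval γ = 0) (h1 : (A 1 0).eval γ = 0) :
    ∃ B : Matrix (Fin 2) (Fin 2) F[X], mstar B = B ∧
      A = mstar !![X - C γ, 0; 0, 1] * B * !![X - C γ, 0; 0, 1] := by
  obtain ⟨a, b, d, ha, hd, rfl⟩ := exists_eq_of_fin_two_of_mstar_eq hA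
  simp only [of_apply, cons_val', cons_val_zero, cons_val_one, empty_val', cons_val_fin_one,
    eval_pstar] at h0 h1
  obtain ⟨k, hk, rfl⟩ := exists_eq_mul_pstar_mul_of_eval_eq_zero h2 ha h0
  obtain ⟨l, rfl⟩ : X + C γ ∣ b := by
    simpa using dvd_iff_isRoot.2 (show b.IsRoot (-γ) from h1)
  refine ⟨!![k, -l; -pstar l, d], ?_, ?_⟩
  · rw [mstar_of_fin_two]; simp [hk, hd]
  · rw [mstar_mul_mul_diag_fin_two]
    refine Matrix.ext fun i j => ?_
    fin_cases i <;> fin_cases j <;>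
      simp only [Fin.zero_eta, Fin.mk_one, Fin.isValue, of_apply, cons_val', cons_val_zero,
        cons_val_one, cons_val_fin_one, pstar_sub, pstar_X, pstar_C, pstar_mul, pstar_add] <;> ring

lemma eq_mstar_adjugate_mul_mul {n : ℕ} {B D σ : Matrix (Fin n) (Fin n) F[X]} (hσ : σ.det = 1)
    (h : mstar σ * B * σ = D) : B = mstar σ.adjugate * D * σ.adjugate := by
  have hσσ : σ * σ.adjugate = 1 := by rw [mul_adjugate, hσ, one_smul]
  calc B = mstar (σ * σ.adjugate) * B * (σ * σ.adjugate) := by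
        rw [hσσ, mstar_one, Matrix.one_mul, Matrix.mul_one]
    _ = mstar σ.adjugate * (mstar σ * B * σ) * σ.adjugate := by
        simp only [mstar_mul, Matrix.mul_assoc]
    _ = mstar σ.adjugate * D * σ.adjugate := by rw [h]

lemma one_mem_range_hermForm_of_mstar_mul_mul_eq_diagonal [IsAlgClosed F] (h2 : (2 : F) ≠ 0)
    {B σ : Matrix (Fin 2) (Fin 2) F[X]} (hB : mstar B = B) (hB0 : B.det ≠ 0) (hσ : σ.det = 1)
    (hσB : mstar σ * B * σ = diagonal ![1, B.det]) {γ : F}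
    (htop : (mstar !![X - C γ, 0; 0, 1] * B * !![X - C γ, 0; 0, 1]).entryIdeal = ⊤) :
    1 ∈ Set.range (hermForm (mstar !![X - C γ, 0; 0, 1] * B * !![X - C γ, 0; 0, 1])) := by
  set μ := B.det
  have hμ : pstar μ = μ := by rw [← det_mstar, hB]
  have hB' := eq_mstar_adjugate_mul_mul hσ hσB
  have hB01 : B 0 1 = -(pstar (σ 1 1) * σ 0 1) - pstar (σ 1 0) * μ * σ 0 0 := by
    rw [hB']
    simp only [adjugate_fin_two, Matrix.mul_apply, Fin.sum_univ_two, mstar_apply, of_apply,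
      cons_val', cons_val_zero, cons_val_one, cons_val_fin_one, diagonal_apply_eq,
      diagonal_apply_ne _ zero_ne_one, diagonal_apply_ne _ one_ne_zero, pstar_neg]
    ring
  have hB11 : B 1 1 = pstar (σ 0 1) * σ 0 1 + pstar (σ 0 0) * μ * σ 0 0 := by
    rw [hB']; simp [adjugate_fin_two, Matrix.mul_apply, Fin.sum_univ_two]
  have hprim : (pstar (X - C γ) * B 0 1).eval γ ≠ 0 ∨ (B 1 1).eval γ ≠ 0 := by
    rw [mstar_mul_mul_diag_fin_two] at htop
    obtain ⟨i, j, hij⟩ := Matrix.exists_eval_ne_zero_of_entryIdeal_eq_top htop γ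
    fin_cases i <;> fin_cases j
    · simp at hij
    · exact Or.inl hij
    · simp at hij
    · exact Or.inr hij
  obtain ⟨f, g, hfg, hγ⟩ : ∃ f g : F[X], f * pstar f + μ * (g * pstar g) = 1 ∧
      (σ 0 0 * f + σ 0 1 * g).eval γ = 0 := by
    rcases eq_or_ne γ 0 with rfl | hγ
    · refine exists_norm_form_eq_one_at_zero h2 hμ fun h => hprim.resolve_left (by simp) ?_
      simp only [hB11, eval_add, eval_mul, eval_pstar, neg_zero]
      linear_combination h
    · refine exists_norm_form_eq_one_at_ne_zero h2 hμ hB0 hγ ?_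
      by_contra! h
      simp [hB01, hB11, h.1, h.2] at hprim
  obtain ⟨k, hk⟩ := dvd_iff_isRoot.2 hγ
  refine ⟨![k, σ 1 0 * f + σ 1 1 * g], ?_⟩
  have hv : !![X - C γ, 0; 0, 1] *ᵥ ![k, σ 1 0 * f + σ 1 1 * g] = σ *ᵥ ![f, g] := by
    ext i : 1
    fin_cases i <;> simp [mulVec, dotProduct, Fin.sum_univ_two, ← hk]
  rw [hermForm_mstar_mul_mul, hv, ← hermForm_mstar_mul_mul, hσB, hermForm_fin_two]
  simp only [diagonal_apply_eq, diagonal_apply_ne _ zero_ne_one, diagonal_apply_ne _ one_ne_zero,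
    cons_val_zero, cons_val_one, cons_val_fin_one]
  linear_combination hfg

theorem one_mem_range_hermForm_of_entryIdeal_eq_top [IsAlgClosed F] (h2 : (2 : F) ≠ 0)
    {A : Matrix (Fin 2) (Fin 2) F[X]} (hA : mstar A = A) (hdet : A.det ≠ 0)
    (hA1 : A.entryIdeal = ⊤) : 1 ∈ Set.range (hermForm A) := by
  induction hn : A.det.natDegree using Nat.strong_induction_on generalizing A with
  | _ n ih =>
  obtain hn0 | hn0 := Nat.eq_zero_or_pos n
  · obtain ⟨c, hc⟩ := natDegree_eq_zero.1 (hn ▸ hn0)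
    exact one_mem_range_hermForm_of_det_eq_C h2 hA (by rintro rfl; simp_all) hc.symm
  obtain ⟨γ, hγ⟩ :=
    IsAlgClosed.exists_root A.det (natDegree_pos_iff_degree_pos.1 (hn ▸ hn0)).ne'
  obtain ⟨T, hT, h0, h1⟩ := exists_isUnit_det_eval_mstar_mul_mul_eq_zero hγ
  obtain ⟨B, hB, hAB⟩ :=
    exists_eq_mstar_mul_mul_of_eval_eq_zero h2 (mstar_mstar_mul_mul hA T) h0 h1
  have hdet₁ : (mstar T * A * T).det = pstar (X - C γ) * (X - C γ) * B.det := by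
    rw [hAB, det_mstar_mul_mul, det_fin_two_of, mul_one, mul_zero, sub_zero]
  have hB0 : B.det ≠ 0 := by
    rintro h
    rw [h, mul_zero, det_mstar_mul_mul] at hdet₁
    exact hdet ((mul_eq_zero.1 hdet₁).resolve_left (hT.pstar.mul hT).ne_zero)
  have hlt : B.det.natDegree < n := by
    have hπ : X - C γ ≠ 0 := X_sub_C_ne_zero γ
    have hπ' : pstar (X - C γ) ≠ 0 := pstar_eq_zero.not.2 hπ
    have := natDegree_eq_of_degree_eq (degree_eq_degree_of_associated
      (associated_unit_mul_left A.det _ (hT.pstar.mul hT)))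
    rw [← det_mstar_mul_mul, hdet₁, natDegree_mul (mul_ne_zero hπ' hπ) hB0,
      natDegree_mul hπ' hπ, natDegree_pstar, natDegree_X_sub_C] at this
    omega
  have hA₁ : (mstar T * A * T).entryIdeal = ⊤ := (entryIdeal_mstar_mul_mul hT A).trans hA1
  rw [hAB] at hA₁
  have hB1 : B.entryIdeal = ⊤ := top_le_iff.1 (hA₁ ▸ Matrix.entryIdeal_mul_mul_le _ _ _)
  obtain ⟨σ, hσ, hσB⟩ :=
    exists_det_eq_one_mstar_mul_mul_eq_diagonal hB (ih _ hlt hB hB0 hB1 rfl)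
  refine range_hermForm_mstar_mul_mul_subset A T ?_
  rw [hAB]
  exact one_mem_range_hermForm_of_mstar_mul_mul_eq_diagonal h2 hB hB0 hσ hσB hA₁

end

/-- A `2×2` hermitian matrix `A` over `F[t]` with `det A ≠ 0` whose entries
generate the unit ideal is congruent to `diag(1, det A)`. -/
theorem hermitian_two_by_two_congruent_diag {F : Type*} [Field F]
    [IsAlgClosed F] (h2 : (2 : F) ≠ 0)
    (A : Matrix (Fin 2) (Fin 2) F[X]) (hA : mstar A = A)
    (hdet : A.det ≠ 0)
    (hgcd : Ideal.span (Set.range fun p : Fin 2 × Fin 2 => A p.1 p.2) = ⊤) :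
    PolyCongruent A (Matrix.diagonal ![1, A.det]) := by
  obtain ⟨S, hS, hSA⟩ := exists_det_eq_one_mstar_mul_mul_eq_diagonal hA
    (one_mem_range_hermForm_of_entryIdeal_eq_top h2 hA hdet hgcd)
  exact ⟨S, hS ▸ isUnit_one, hSA.symm⟩
end

section
/- Let a, b ∈ F[t] with a pure (i.e., gcd(a, a*) = 1) and b even (i.e., b* = b). Then there exists x ∈ F[t] such that a x + a* x* = b. -/
open Polynomial

/-- `A` and `B` are congruent if `B = S* A S` for some `S ∈ GL_n(F[t])`. -/
def MatCongruent {F : Type*} [Field F] {n : ℕ}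
    (A B : Matrix (Fin n) (Fin n) F[X]) : Prop :=
  ∃ S : Matrix (Fin n) (Fin n) F[X], IsUnit S.det ∧ B = mstar S * A * S

/- If `u a + v σa = 1`, then `x = (u + σv) b / 2` works: `a x + σa σx` is half of
`(u a + v σa) b + σ((u a + v σa) b) = 2 b`. -/
theorem exists_mul_add_map_mul_map_eq_of_isCoprime {R : Type*} [CommRing R] (σ : R →+* R)
    (hσ : Function.Involutive σ) (h2 : IsUnit (2 : R)) {a b : R}
    (ha : IsCoprime a (σ a)) (hb : σ b = b) :
    ∃ x, a * x + σ a * σ x = b := by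
  obtain ⟨u, v, huv⟩ := ha
  obtain ⟨c, hc⟩ := h2.exists_left_inv
  have hσc : σ c = c := by
    have h : σ c * 2 = 1 := by rw [← map_ofNat σ 2, ← map_mul, hc, map_one]
    exact (left_inv_eq_right_inv hc (by rw [mul_comm, h])).symm
  refine ⟨c * (u + σ v) * b, ?_⟩
  have hσuv : σ u * σ a + σ v * a = 1 := by
    rw [← map_one σ, ← huv, map_add, map_mul, map_mul, hσ a]
  simp only [map_mul, map_add, hσc, hσ v, hb]
  linear_combination (c * b) * (huv + hσuv) + b * hc

lemma pstar_eq_compRingHom {F : Type*} [Field F] (p : F[X]) :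
    pstar p = compRingHom (-X) p := rfl

lemma pstar_involutive {F : Type*} [Field F] : Function.Involutive (pstar (F := F)) := by
  intro p
  simp [pstar, comp_assoc]

theorem pure_solves_even_general {F : Type*} [Field F]
    (h2 : (2 : F) ≠ 0) (a b : F[X])
    (ha : IsCoprime a (pstar a)) (hb : pstar b = b) :
    ∃ x : F[X], a * x + pstar a * pstar x = b := by
  have h2' : IsUnit (2 : F[X]) := by
    rw [← map_ofNat C 2]
    exact isUnit_C.mpr h2.isUnit
  simp only [pstar_eq_compRingHom] at ha hb ⊢
  exact exists_mul_add_map_mul_map_eq_of_isCoprime _ pstar_involutive h2' ha hb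

/-- If `a ∈ F[t]` is pure and `b` is even, then `a x + a* x* = b` for some `x`. -/
theorem pure_solves_even {F : Type*} [Field F] [IsAlgClosed F]
    (h2 : (2 : F) ≠ 0) (a b : F[X])
    (ha : IsCoprime a (pstar a)) (hb : pstar b = b) :
    ∃ x : F[X], a * x + pstar a * pstar x = b :=
  pure_solves_even_general h2 a b ha hb
end
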